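/- arXiv:1907.09101 — 2 statements merged into one kernel-verified Lean document; each statement's English description precedes it below -/
import Mathlib

section
/- The agent-alternating formula ◇_a □_b □_a p → p (for distinct agents a, b) is a theorem of the modal logic B = KTB but is not a theorem of S4. In particular B|_alt is not contained in S4|_alt. -/
/-- Formulas of the multi-agent modal language: p | ¬φ | (φ ∧ φ) | □_a φ. -/
inductive Fm (A : Type) : Type
  | atom : ℕ → Fm A
  | neg : Fm A → Fm A
  | and : Fm A → Fm A → Fm A
  | box : A → Fm A → Fm A

namespace Fm
def imp {A : Type} (φ ψ : Fm A) : Fm A := .neg (.and φ (.neg ψ))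
def or {A : Type} (φ ψ : Fm A) : Fm A := .neg (.and (.neg φ) (.neg ψ))
def dia {A : Type} (a : A) (φ : Fm A) : Fm A := .neg (.box a (.neg φ))
end Fm

/-- Kripke models with agent set `A` and world type `W`. -/
structure Kripke (A W : Type) where
  R : A → W → W → Prop
  V : ℕ → W → Prop

/-- Satisfaction. -/
def Sat {A W : Type} (M : Kripke A W) : W → Fm A → Prop
  | w, .atom n => M.V n w
  | w, .neg φ => ¬ Sat M w φ
  | w, .and φ ψ => Sat M w φ ∧ Sat M w ψ
  | w, .box a φ => ∀ v, M.R a w v → Sat M v φ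

/-- The fragments L_{-a}: φ ::= p | □_x ψ (x ≠ a, ψ ∈ L_{-x}) | ¬φ | (φ ∧ φ). -/
inductive LMinus {A : Type} : A → Fm A → Prop
  | atom (a : A) (n : ℕ) : LMinus a (.atom n)
  | box {a x : A} {ψ : Fm A} : x ≠ a → LMinus x ψ → LMinus a (.box x ψ)
  | neg {a : A} {φ : Fm A} : LMinus a φ → LMinus a (.neg φ)
  | and {a : A} {φ ψ : Fm A} : LMinus a φ → LMinus a ψ → LMinus a (.and φ ψ)

/-- The agent-alternating fragment L_alt. -/
inductive LAlt {A : Type} : Fm A → Prop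
  | atom (n : ℕ) : LAlt (.atom n)
  | chi {φ : Fm A} (a : A) : LMinus a φ → LAlt φ
  | neg {φ : Fm A} : LAlt φ → LAlt (.neg φ)
  | and {φ ψ : Fm A} : LAlt φ → LAlt ψ → LAlt (.and φ ψ)

/-- The fragments L_X for X ⊆ A: φ ::= p | □_x ψ (x ∈ X, ψ ∈ L_{X\{x}}) | ¬φ | (φ ∧ φ). -/
inductive LX {A : Type} : Set A → Fm A → Prop
  | atom (X : Set A) (n : ℕ) : LX X (.atom n)
  | box {X : Set A} {x : A} {ψ : Fm A} : x ∈ X → LX (X \ {x}) ψ → LX X (.box x ψ)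
  | neg {X : Set A} {φ : Fm A} : LX X φ → LX X (.neg φ)
  | and {X : Set A} {φ ψ : Fm A} : LX X φ → LX X ψ → LX X (.and φ ψ)

/-- Immediate subformula relation. -/
inductive ISub {A : Type} : Fm A → Fm A → Prop
  | neg (φ : Fm A) : ISub φ (.neg φ)
  | andL (φ ψ : Fm A) : ISub φ (.and φ ψ)
  | andR (φ ψ : Fm A) : ISub ψ (.and φ ψ)
  | box (a : A) (φ : Fm A) : ISub φ (.box a φ)

/-- An occurrence type of φ: a nonempty sequence of formulas, each an immediate
subformula of the next, ending in φ. -/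
def IsOcc {A : Type} (l : List (Fm A)) (φ : Fm A) : Prop :=
  l ≠ [] ∧ l.getLast? = some φ ∧ List.Chain' ISub l

/-- A □_a-occurrence of φ. -/
def IsBoxOcc {A : Type} (a : A) (l : List (Fm A)) (φ : Fm A) : Prop :=
  IsOcc l φ ∧ ∃ β, l.head? = some (Fm.box a β)

/-- O ≤ O' iff O' is a suffix of O (prefix-extension order on occurrences). -/
def OccLe {A : Type} (O O' : List (Fm A)) : Prop := O' <:+ O

/-- φ is agent-alternating: between any two nested □_a-occurrences there is a
□_b-occurrence for some b ≠ a. -/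
def AgentAlternating {A : Type} (φ : Fm A) : Prop :=
  ∀ (a : A) (O O' : List (Fm A)), IsBoxOcc a O φ → IsBoxOcc a O' φ → O ≠ O' → OccLe O O' →
    ∃ b : A, b ≠ a ∧ ∃ O'' : List (Fm A), IsBoxOcc b O'' φ ∧ OccLe O O'' ∧ OccLe O'' O'

/-- φ is agent-nonrepeating: no □_a-occurrence lies below another □_a-occurrence. -/
def AgentNonrepeating {A : Type} (φ : Fm A) : Prop :=
  ∀ (a : A) (O O' : List (Fm A)), IsBoxOcc a O φ → IsBoxOcc a O' φ → O ≠ O' → ¬ OccLe O O'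

/-- Boolean evaluation treating atoms and boxed formulas as atomic. -/
def evalP {A : Type} (v : Fm A → Bool) : Fm A → Bool
  | .neg φ => ! evalP v φ
  | .and φ ψ => evalP v φ && evalP v ψ
  | φ => v φ

/-- Propositional tautologies (in the signature ¬, ∧, with boxed formulas atomic). -/
def Taut {A : Type} (φ : Fm A) : Prop := ∀ v : Fm A → Bool, evalP v φ = true

/-- Provability in the smallest normal modal logic containing the axioms `Ax`. -/
inductive Prv {A : Type} (Ax : Fm A → Prop) : Fm A → Prop
  | taut {φ : Fm A} : Taut φ → Prv Ax φ
  | ax {φ : Fm A} : Ax φ → Prv Ax φ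
  | k (a : A) (φ ψ : Fm A) :
      Prv Ax (Fm.imp (.box a (Fm.imp φ ψ)) (Fm.imp (.box a φ) (.box a ψ)))
  | mp {φ ψ : Fm A} : Prv Ax (Fm.imp φ ψ) → Prv Ax φ → Prv Ax ψ
  | nec {φ : Fm A} (a : A) : Prv Ax φ → Prv Ax (.box a φ)

def AxNone {A : Type} : Fm A → Prop := fun _ => False
def AxT {A : Type} : Fm A → Prop := fun χ => ∃ (a : A) (φ : Fm A), χ = Fm.imp (.box a φ) φ
def Ax4 {A : Type} : Fm A → Prop := fun χ => ∃ (a : A) (φ : Fm A), χ = Fm.imp (.box a φ) (.box a (.box a φ))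
def Ax5 {A : Type} : Fm A → Prop := fun χ => ∃ (a : A) (φ : Fm A), χ = Fm.imp (.neg (.box a φ)) (.box a (.neg (.box a φ)))
def AxB {A : Type} : Fm A → Prop := fun χ => ∃ (a : A) (φ : Fm A), χ = Fm.imp φ (.box a (Fm.dia a φ))
def AxD {A : Type} : Fm A → Prop := fun χ => ∃ (a : A) (φ : Fm A), χ = Fm.imp (.box a φ) (Fm.dia a φ)

def Ser {W : Type} (R : W → W → Prop) : Prop := ∀ u, ∃ v, R u v
def Eucl {W : Type} (R : W → W → Prop) : Prop := ∀ u v w, R u v → R u w → R v w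

/-- Agent-alternating bisimulation family (`none` plays the role of `alt`). -/
def IsAAFamily {A W1 W2 : Type} (M : Kripke A W1) (N : Kripke A W2)
    (f : Option A → W1 → W2 → Prop) : Prop :=
  ∀ (o : Option A) (u : W1) (v : W2), f o u v →
    (∀ n, M.V n u ↔ N.V n v) ∧
    (∀ b : A, o ≠ some b →
      (∀ u', M.R b u u' → ∃ v', N.R b v v' ∧ f (some b) u' v') ∧
      (∀ v', N.R b v v' → ∃ u', M.R b u u' ∧ f (some b) u' v'))

/-- Agent-nonrepeating bisimulation family. -/
def IsNRFamily {A W1 W2 : Type} (M : Kripke A W1) (N : Kripke A W2)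
    (f : Set A → W1 → W2 → Prop) : Prop :=
  ∀ (X : Set A) (u : W1) (v : W2), f X u v →
    (∀ n, M.V n u ↔ N.V n v) ∧
    (∀ x ∈ X,
      (∀ u', M.R x u u' → ∃ v', N.R x v v' ∧ f (X \ {x}) u' v') ∧
      (∀ v', N.R x v v' → ∃ u', M.R x u u' ∧ f (X \ {x}) u' v'))

/-- One step in an agent-alternating sequence. -/
def Step {A W : Type} (M : Kripke A W) : (Option A × W) → (Option A × W) → Prop :=
  fun x y => x.1 ≠ y.1 ∧ ∃ b : A, y.1 = some b ∧ M.R b x.2 y.2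

/-- Valid worlds of an agent-alternating unraveling. -/
def ValidSeq {A W : Type} (M : Kripke A W) (s : List (Option A × W)) : Prop :=
  s ≠ [] ∧ (∃ w, s.head? = some (none, w)) ∧ (∀ x ∈ s.tail, x.1 ≠ none) ∧
    List.Chain' (Step M) s

def UWorld {A W : Type} (M : Kripke A W) : Type := {s : List (Option A × W) // ValidSeq M s}

def lastEntry {A W : Type} {M : Kripke A W} (s : UWorld M) : Option A × W :=
  s.val.getLast s.prop.1

/-- N is an agent-alternating unraveling of M. -/
def IsAAUnraveling {A W : Type} (M : Kripke A W) (N : Kripke A (UWorld M)) : Prop :=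
  (∀ (b : A) (s : UWorld M), (lastEntry s).1 ≠ some b →
    ∀ t : UWorld M, N.R b s t ↔ ∃ w', M.R b (lastEntry s).2 w' ∧ t.val = s.val ++ [(some b, w')])
  ∧ (∀ n (s : UWorld M), N.V n s ↔ M.V n (lastEntry s).2)

/-- The canonical relation family between M and any of its agent-alternating unravelings. -/
def PFam {A W : Type} (M : Kripke A W) : Option A → W → UWorld M → Prop :=
  fun o u s => lastEntry s = (o, u)

/-- Finite agent-alternating bisimulation relations: `BisimN M N n (some a)` is ⇆_{-a}^n,
`BisimN M N n none` is ⇆_alt^n. -/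
def BisimN {A W1 W2 : Type} (M : Kripke A W1) (N : Kripke A W2) :
    ℕ → Option A → W1 → W2 → Prop
  | 0, _, u, v => ∀ n, M.V n u ↔ N.V n v
  | (n+1), o, u, v => (∀ m, M.V m u ↔ N.V m v) ∧
      ∀ b : A, o ≠ some b →
        (∀ u', M.R b u u' → ∃ v', N.R b v v' ∧ BisimN M N n (some b) u' v') ∧
        (∀ v', N.R b v v' → ∃ u', M.R b u u' ∧ BisimN M N n (some b) u' v')

/-- Standard n-bisimilarity. -/
def StdBisimN {A W1 W2 : Type} (M : Kripke A W1) (N : Kripke A W2) :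
    ℕ → W1 → W2 → Prop
  | 0, u, v => ∀ n, M.V n u ↔ N.V n v
  | (n+1), u, v => (∀ m, M.V m u ↔ N.V m v) ∧
      ∀ b : A,
        (∀ u', M.R b u u' → ∃ v', N.R b v v' ∧ StdBisimN M N n u' v') ∧
        (∀ v', N.R b v v' → ∃ u', M.R b u u' ∧ StdBisimN M N n u' v')

/-! In B, `◇_a □_a φ → φ` is the contrapositive of the B axiom for `¬φ`, and T for `b` turns
`◇_a □_b □_a φ` into `◇_a □_a φ`. In S4 the formula fails on two worlds `false ≤ true`, with
`R_a` the order, `R_b` the identity and `p` true only at `true`: from `false` the agent `a` sees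
`true`, where `□_b □_a p` holds, but `p` is false at `false`. The order is not symmetric, which is
exactly what B would forbid. -/

section

variable {A : Type}

lemma lAlt_dia_box_box_imp {a b : A} (hab : a ≠ b) {φ : Fm A} (hφ : LMinus a φ) :
    LAlt (Fm.imp (Fm.dia a (.box b (.box a φ))) φ) :=
  .neg <| .and (.neg <| .chi b <| .box hab <| .neg <| .box hab.symm <| .box hab hφ)
    (.neg <| .chi a hφ)

namespace Prv

variable {Ax : Fm A → Prop}

lemma imp_trans {φ ψ χ : Fm A} (h₁ : Prv Ax (Fm.imp φ ψ)) (h₂ : Prv Ax (Fm.imp ψ χ)) :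
    Prv Ax (Fm.imp φ χ) := by
  have t : Taut (Fm.imp (Fm.imp ψ χ) (Fm.imp (Fm.imp φ ψ) (Fm.imp φ χ))) := by
    intro v
    simp only [Fm.imp, evalP]
    cases evalP v φ <;> cases evalP v ψ <;> cases evalP v χ <;> rfl
  exact mp (mp (taut t) h₂) h₁

lemma contrapose {φ ψ : Fm A} (h : Prv Ax (Fm.imp φ ψ)) :
    Prv Ax (Fm.imp (.neg ψ) (.neg φ)) := by
  have t : Taut (Fm.imp (Fm.imp φ ψ) (Fm.imp (.neg ψ) (.neg φ))) := by
    intro v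
    simp only [Fm.imp, evalP]
    cases evalP v φ <;> cases evalP v ψ <;> rfl
  exact mp (taut t) h

lemma imp_neg_neg (φ : Fm A) : Prv Ax (Fm.imp φ (.neg (.neg φ))) :=
  taut fun v => by simp only [Fm.imp, evalP]; cases evalP v φ <;> rfl

lemma neg_neg_imp (φ : Fm A) : Prv Ax (Fm.imp (.neg (.neg φ)) φ) :=
  taut fun v => by simp only [Fm.imp, evalP]; cases evalP v φ <;> rfl

lemma box_mono (a : A) {φ ψ : Fm A} (h : Prv Ax (Fm.imp φ ψ)) :
    Prv Ax (Fm.imp (.box a φ) (.box a ψ)) :=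
  mp (k a φ ψ) (nec a h)

lemma dia_mono (a : A) {φ ψ : Fm A} (h : Prv Ax (Fm.imp φ ψ)) :
    Prv Ax (Fm.imp (Fm.dia a φ) (Fm.dia a ψ)) :=
  contrapose (box_mono a (contrapose h))

lemma dia_box_imp_of_axB (hB : ∀ χ, AxB χ → Ax χ) (a : A) (φ : Fm A) :
    Prv Ax (Fm.imp (Fm.dia a (.box a φ)) φ) := by
  have hBneg : Prv Ax (Fm.imp (.neg φ) (.box a (Fm.dia a (.neg φ)))) := ax (hB _ ⟨a, _, rfl⟩)
  -- `¬□_a ◇_a ¬φ` is literally `◇_a □_a ¬¬φ`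
  exact imp_trans (dia_mono a (box_mono a (imp_neg_neg φ)))
    (imp_trans (contrapose hBneg) (neg_neg_imp φ))

lemma dia_box_box_imp_of_axT_axB (hT : ∀ χ, AxT χ → Ax χ) (hB : ∀ χ, AxB χ → Ax χ)
    (a b : A) (φ : Fm A) : Prv Ax (Fm.imp (Fm.dia a (.box b (.box a φ))) φ) :=
  imp_trans (dia_mono a (ax (hT _ ⟨b, _, rfl⟩))) (dia_box_imp_of_axB hB a φ)

end Prv

section Semantics

variable {W : Type} (M : Kripke A W)

lemma sat_imp_iff (w : W) (φ ψ : Fm A) :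
    Sat M w (Fm.imp φ ψ) ↔ (Sat M w φ → Sat M w ψ) := by
  simp only [Fm.imp, Sat]
  tauto

open Classical in
lemma evalP_decide_sat_iff (w : W) (φ : Fm A) :
    evalP (fun ψ => decide (Sat M w ψ)) φ = true ↔ Sat M w φ := by
  induction φ with
  | atom n => simp [evalP]
  | neg φ ih => simp only [evalP, Sat, Bool.not_eq_true', ← ih]; simp
  | and φ ψ ih₁ ih₂ => simp [evalP, Sat, ih₁, ih₂]
  | box a φ => simp [evalP]

lemma Prv.sat {Ax : Fm A → Prop} (hAx : ∀ φ, Ax φ → ∀ w, Sat M w φ) {φ : Fm A}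
    (h : Prv Ax φ) (w : W) : Sat M w φ := by
  induction h generalizing w with
  | taut ht => exact (evalP_decide_sat_iff M w _).mp (ht _)
  | ax hφ => exact hAx _ hφ w
  | k a φ ψ =>
    simp only [sat_imp_iff]
    intro himp hφ v hv
    exact (sat_imp_iff M v φ ψ).mp (himp v hv) (hφ v hv)
  | mp _ _ ih₁ ih₂ => exact (sat_imp_iff M w _ _).mp (ih₁ w) (ih₂ w)
  | nec a _ ih => exact fun v _ => ih v

lemma Prv.sat_of_axT_ax4 (hrefl : ∀ x u, M.R x u u)
    (htrans : ∀ x u v w, M.R x u v → M.R x v w → M.R x u w)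
    {φ : Fm A} (h : Prv (fun χ => AxT χ ∨ Ax4 χ) φ) (w : W) : Sat M w φ := by
  refine Prv.sat M ?_ h w
  rintro _ (⟨x, ψ, rfl⟩ | ⟨x, ψ, rfl⟩) u <;> rw [sat_imp_iff]
  · exact fun hψ => hψ u (hrefl x u)
  · exact fun hψ v huv t hvt => hψ t (htrans x u v t huv hvt)

end Semantics

def orderModel (a : A) : Kripke A Bool where
  R x u v := u = v ∨ x = a ∧ u < v
  V _ w := w = true

lemma orderModel_refl (a x : A) (u : Bool) : (orderModel a).R x u u := Or.inl rfl

lemma orderModel_trans (a x : A) (u v w : Bool) :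
    (orderModel a).R x u v → (orderModel a).R x v w → (orderModel a).R x u w := by
  simp only [orderModel]
  cases u <;> cases v <;> cases w <;> simp

lemma not_sat_orderModel_dia_box_box_imp {a b : A} (hab : a ≠ b) (n : ℕ) :
    ¬ Sat (orderModel a) false (Fm.imp (Fm.dia a (.box b (.box a (.atom n)))) (.atom n)) := by
  have hbox : Sat (orderModel a) true (.box b (.box a (.atom n))) := by
    rintro _ (rfl | ⟨hba, -⟩)
    · rintro w (rfl | ⟨-, hw⟩)
      · rfl
      · exact Bool.eq_true_of_true_le hw.le
    · exact absurd hba.symm hab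
  rw [sat_imp_iff]
  intro h
  exact Bool.false_ne_true (h fun hall => hall true (Or.inr ⟨rfl, Bool.false_lt_true⟩) hbox)

end

/-- ◇_a□_b□_a p → p is agent-alternating, a theorem of B = KTB, and not a theorem
of S4; hence B|_alt ⊄ S4|_alt. -/
theorem stmt5 {A : Type} (a b : A) (hab : a ≠ b) :
    LAlt (Fm.imp (Fm.dia a (.box b (.box a (.atom 0)))) (.atom 0)) ∧
    Prv (fun χ => AxT χ ∨ AxB χ) (Fm.imp (Fm.dia a (.box b (.box a (.atom 0)))) (.atom 0)) ∧
    ¬ Prv (fun χ => AxT χ ∨ Ax4 χ) (Fm.imp (Fm.dia a (.box b (.box a (.atom 0)))) (.atom 0)) ∧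
    ∃ φ : Fm A, LAlt φ ∧ Prv (fun χ => AxT χ ∨ AxB χ) φ ∧
      ¬ Prv (fun χ => AxT χ ∨ Ax4 χ) φ := by
  have hAlt := lAlt_dia_box_box_imp hab (LMinus.atom a 0)
  have hB : Prv (fun χ => AxT χ ∨ AxB χ)
      (Fm.imp (Fm.dia a (.box b (.box a (.atom 0)))) (.atom 0)) :=
    Prv.dia_box_box_imp_of_axT_axB (fun _ => Or.inl) (fun _ => Or.inr) a b _
  have hS4 : ¬ Prv (fun χ => AxT χ ∨ Ax4 χ)
      (Fm.imp (Fm.dia a (.box b (.box a (.atom 0)))) (.atom 0)) := fun h =>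
    not_sat_orderModel_dia_box_box_imp hab 0 <|
      Prv.sat_of_axT_ax4 _ (orderModel_refl a) (orderModel_trans a) h false
  exact ⟨hAlt, hB, hS4, _, hAlt, hB, hS4⟩
end

section
/- The agent-alternating formula ◇_a □_b ◇_a p → ◇_a p (for distinct agents a, b) is a theorem of S4 but is not a theorem of B = KTB. In particular S4|_alt is not contained in B|_alt. -/
section Stmt6Helpers

variable {A : Type}

lemma evalP_neg (v : Fm A → Bool) (φ : Fm A) : evalP v (.neg φ) = !evalP v φ := rfl
lemma evalP_and (v : Fm A → Bool) (φ ψ : Fm A) :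
    evalP v (.and φ ψ) = (evalP v φ && evalP v ψ) := rfl
lemma evalP_imp (v : Fm A → Bool) (φ ψ : Fm A) :
    evalP v (Fm.imp φ ψ) = (!(evalP v φ && !evalP v ψ)) := rfl

lemma prv_hs {Ax : Fm A → Prop} {φ ψ χ : Fm A} (h1 : Prv Ax (Fm.imp φ ψ))
    (h2 : Prv Ax (Fm.imp ψ χ)) : Prv Ax (Fm.imp φ χ) := by
  have t : Taut (Fm.imp (Fm.imp φ ψ) (Fm.imp (Fm.imp ψ χ) (Fm.imp φ χ))) := by
    intro v
    simp only [evalP_imp]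
    cases evalP v φ <;> cases evalP v ψ <;> cases evalP v χ <;> rfl
  exact Prv.mp (Prv.mp (Prv.taut t) h1) h2

lemma prv_contra {Ax : Fm A → Prop} {φ ψ : Fm A} (h : Prv Ax (Fm.imp φ ψ)) :
    Prv Ax (Fm.imp (.neg ψ) (.neg φ)) := by
  have t : Taut (Fm.imp (Fm.imp φ ψ) (Fm.imp (.neg ψ) (.neg φ))) := by
    intro v
    simp only [evalP_imp, evalP_neg]
    cases evalP v φ <;> cases evalP v ψ <;> rfl
  exact Prv.mp (Prv.taut t) h

lemma prv_dni {Ax : Fm A → Prop} (φ : Fm A) : Prv Ax (Fm.imp φ (.neg (.neg φ))) := by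
  apply Prv.taut
  intro v
  simp only [evalP_imp, evalP_neg]
  cases evalP v φ <;> rfl

lemma prv_boxMono {Ax : Fm A → Prop} {φ ψ : Fm A} (a : A) (h : Prv Ax (Fm.imp φ ψ)) :
    Prv Ax (Fm.imp (.box a φ) (.box a ψ)) :=
  Prv.mp (Prv.k a φ ψ) (Prv.nec a h)

lemma sat_imp {W : Type} (M : Kripke A W) (w : W) (φ ψ : Fm A) :
    Sat M w (Fm.imp φ ψ) ↔ (Sat M w φ → Sat M w ψ) := by
  unfold Fm.imp
  simp only [Sat]
  tauto

open Classical in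
lemma evalP_sat {W : Type} (M : Kripke A W) (w : W) (φ : Fm A) :
    evalP (fun ψ => decide (Sat M w ψ)) φ = true ↔ Sat M w φ := by
  induction φ with
  | atom n => exact decide_eq_true_iff
  | neg φ ih =>
      show (!evalP _ φ) = true ↔ _
      simp only [Bool.not_eq_true', Sat]
      rw [← ih]
      simp
  | and φ ψ ih1 ih2 =>
      show (evalP _ φ && evalP _ ψ) = true ↔ _
      simp only [Bool.and_eq_true, Sat, ih1, ih2]
  | box x φ ih => exact decide_eq_true_iff

lemma soundnessTB {W : Type} (M : Kripke A W) (hr : ∀ (x : A) (w : W), M.R x w w)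
    (hs : ∀ (x : A) (u v : W), M.R x u v → M.R x v u) {φ : Fm A}
    (h : Prv (fun χ => AxT χ ∨ AxB χ) φ) : ∀ w, Sat M w φ := by
  induction h with
  | @taut φ ht =>
      intro w
      have := ht (fun ψ => @decide (Sat M w ψ) (Classical.propDecidable _))
      rwa [evalP_sat] at this
  | @ax φ hax =>
      rcases hax with ⟨x, ψ, rfl⟩ | ⟨x, ψ, rfl⟩
      · intro w
        rw [sat_imp]
        intro hbox
        exact hbox w (hr x w)
      · intro w
        rw [sat_imp]
        intro hψ v hv
        show ¬ Sat M v (Fm.box x (Fm.neg ψ))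
        intro hall
        exact hall w (hs x w v hv) hψ
  | k x φ ψ =>
      intro w
      rw [sat_imp]
      intro h1
      rw [sat_imp]
      intro h2 v hv
      exact (sat_imp M v φ ψ).mp (h1 v hv) (h2 v hv)
  | mp h1 h2 ih1 ih2 =>
      intro w
      exact (sat_imp M w _ _).mp (ih1 w) (ih2 w)
  | nec x h ih =>
      intro w v hv
      exact ih v

/-- The three-world chain relation on Fin 3 (reflexive symmetric closure). -/
def C3 : Fin 3 → Fin 3 → Prop := fun u v =>
  u = v ∨ (u = 0 ∧ v = 1) ∨ (u = 1 ∧ v = 0) ∨ (u = 1 ∧ v = 2) ∨ (u = 2 ∧ v = 1)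

lemma notPrvB (a b : A) (hab : a ≠ b) :
    ¬ Prv (fun χ => AxT χ ∨ AxB χ)
      (Fm.imp (Fm.dia a (.box b (Fm.dia a (.atom 0)))) (Fm.dia a (.atom 0))) := by
  intro h
  set M : Kripke A (Fin 3) :=
    ⟨fun x u v => (x = a ∧ C3 u v) ∨ (x ≠ a ∧ u = v), fun n w => n = 0 ∧ w = 2⟩ with hM
  have hr : ∀ (x : A) (w : Fin 3), M.R x w w := by
    intro x w
    by_cases hx : x = a
    · exact Or.inl ⟨hx, Or.inl rfl⟩
    · exact Or.inr ⟨hx, rfl⟩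
  have hsym : ∀ (x : A) (u v : Fin 3), M.R x u v → M.R x v u := by
    intro x u v hx
    rcases hx with ⟨hx, hc⟩ | ⟨hx, rfl⟩
    · refine Or.inl ⟨hx, ?_⟩
      unfold C3 at hc ⊢
      tauto
    · exact Or.inr ⟨hx, rfl⟩
  have hRa : ∀ u v : Fin 3, M.R a u v ↔ C3 u v := by
    intro u v
    constructor
    · rintro (⟨-, hc⟩ | ⟨hx, rfl⟩)
      · exact hc
      · exact absurd rfl hx
    · intro hc; exact Or.inl ⟨rfl, hc⟩
  have hRb : ∀ u v : Fin 3, M.R b u v ↔ u = v := by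
    intro u v
    constructor
    · rintro (⟨hx, -⟩ | ⟨-, rfl⟩)
      · exact absurd hx.symm hab
      · rfl
    · rintro rfl; exact hr b u
  have hsat := soundnessTB M hr hsym h 0
  rw [sat_imp] at hsat
  have hant : Sat M 0 (Fm.dia a (.box b (Fm.dia a (.atom 0)))) := by
    show ¬ ∀ v, M.R a 0 v → ¬ Sat M v (Fm.box b (Fm.dia a (.atom 0)))
    intro hall
    apply hall 1 ((hRa 0 1).mpr (by unfold C3; tauto))
    intro v hv
    rw [hRb] at hv
    subst hv
    show ¬ ∀ u, M.R a 1 u → ¬ Sat M u (Fm.atom 0)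
    intro hall2
    exact hall2 2 ((hRa 1 2).mpr (by unfold C3; tauto)) ⟨rfl, rfl⟩
  have hcon := hsat hant
  apply hcon
  intro v hv hp
  obtain ⟨-, rfl⟩ : (0 : ℕ) = 0 ∧ v = 2 := hp
  have := (hRa 0 2).mp hv
  unfold C3 at this
  simp at this

lemma prvS4 (a b : A) :
    Prv (fun χ => AxT χ ∨ Ax4 χ)
      (Fm.imp (Fm.dia a (.box b (Fm.dia a (.atom 0)))) (Fm.dia a (.atom 0))) := by
  set Ax : Fm A → Prop := fun χ => AxT χ ∨ Ax4 χ with hAx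
  set p : Fm A := .atom 0 with hp
  set q : Fm A := .box a (.neg p) with hq
  have L1 : Prv Ax (Fm.imp (.box b (.neg q)) (.neg q)) := Prv.ax (Or.inl ⟨b, .neg q, rfl⟩)
  have L2 := prv_contra L1
  have L4 : Prv Ax (Fm.imp q (.neg (.box b (.neg q)))) := prv_hs (prv_dni q) L2
  have L5 := prv_boxMono a L4
  have L6 : Prv Ax (Fm.imp q (.box a q)) := Prv.ax (Or.inr ⟨a, .neg p, rfl⟩)
  have L7 := prv_hs L6 L5
  exact prv_contra L7

end Stmt6Helpers

/-- ◇_a□_b◇_a p → ◇_a p is agent-alternating, a theorem of S4, and not a theorem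
of B = KTB; hence S4|_alt ⊄ B|_alt. -/
theorem stmt6 {A : Type} (a b : A) (hab : a ≠ b) :
    LAlt (Fm.imp (Fm.dia a (.box b (Fm.dia a (.atom 0)))) (Fm.dia a (.atom 0))) ∧
    Prv (fun χ => AxT χ ∨ Ax4 χ)
      (Fm.imp (Fm.dia a (.box b (Fm.dia a (.atom 0)))) (Fm.dia a (.atom 0))) ∧
    ¬ Prv (fun χ => AxT χ ∨ AxB χ)
      (Fm.imp (Fm.dia a (.box b (Fm.dia a (.atom 0)))) (Fm.dia a (.atom 0))) ∧
    ∃ φ : Fm A, LAlt φ ∧ Prv (fun χ => AxT χ ∨ Ax4 χ) φ ∧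
      ¬ Prv (fun χ => AxT χ ∨ AxB χ) φ := by
  have hq : LMinus b (Fm.box a (.neg (.atom 0))) :=
    LMinus.box hab (LMinus.neg (LMinus.atom a 0))
  refine ⟨?_, prvS4 a b, notPrvB a b hab, _, ?_, prvS4 a b, notPrvB a b hab⟩
  · exact LAlt.chi b (LMinus.neg (LMinus.and
      (LMinus.neg (LMinus.box hab (LMinus.neg (LMinus.box (Ne.symm hab)
        (LMinus.neg hq)))))
      (LMinus.neg (LMinus.neg hq))))
  · exact LAlt.chi b (LMinus.neg (LMinus.and
      (LMinus.neg (LMinus.box hab (LMinus.neg (LMinus.box (Ne.symm hab)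
        (LMinus.neg hq)))))
      (LMinus.neg (LMinus.neg hq))))
end
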